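/- Let {X_ℓ, f_ℓ} and {Y_ℓ, g_ℓ} be inverse sequences of compact metric spaces with surjective continuous bonding functions, let g : varprojlim{X_ℓ, f_ℓ} → varprojlim{Y_ℓ, g_ℓ} be a continuous function, let ε > 0 and let n be a positive integer. Then there is a positive integer m₀ such that for each positive integer m ≥ m₀ and each j ∈ {1, 2, …, n}: (1) diam(g_{j,n}(T_{n,m}(g)(x))) < ε for every x ∈ X_m, and (2) q_j(g(x)) ∈ g_{j,n}(T_{n,m}(g)(p_m(x))) for each x ∈ varprojlim{X_ℓ, f_ℓ}. -/

import Mathlib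

open Metric Filter Set Function

/-- The inverse limit of an inverse sequence `{X n, f n}` of spaces with
single-valued bonding maps `f n : X (n+1) → X n`. -/
def invLim (X : ℕ → Type*) (f : ∀ n, X (n + 1) → X n) : Set (∀ n, X n) :=
  {x | ∀ n, x n = f n (x (n + 1))}

/-- The composite bonding map `f_{n,m} : X m → X n` for `n ≤ m`. -/
def bondMap {X : ℕ → Type*} (f : ∀ n, X (n + 1) → X n) {n m : ℕ} (h : n ≤ m) :
    X m → X n :=
  Nat.leRecOn (C := fun k => X k → X n) h (fun {k} g => g ∘ f k) id

/-- A set-valued function is upper semicontinuous (with nonempty closed values):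
all of its values are nonempty closed sets and its graph is closed. -/
def IsUSC {A B : Type*} [TopologicalSpace A] [TopologicalSpace B] (F : A → Set B) : Prop :=
  (∀ a, (F a).Nonempty) ∧ (∀ a, IsClosed (F a)) ∧ IsClosed {p : A × B | p.2 ∈ F p.1}

/-- The `T_{n,m}` transformation of a map between inverse limits:
`T_{n,m}(g)(x) = q_n (g (p_m ⁻¹ x))`. -/
def Ttrans {X Y : ℕ → Type*} {f : ∀ n, X (n + 1) → X n} {gs : ∀ n, Y (n + 1) → Y n}
    (g : ↥(invLim X f) → ↥(invLim Y gs)) (n m : ℕ) (x : X m) : Set (Y n) :=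
  {y | ∃ z : ↥(invLim X f), z.1 m = x ∧ (g z).1 n = y}

/-- A space has the fixed point property if every continuous self-map has a fixed point. -/
def HasFPP (Z : Type*) [TopologicalSpace Z] : Prop :=
  ∀ g : Z → Z, Continuous g → ∃ p, g p = p

/-! Points of the compact space `invLim X f` that agree in a late enough coordinate have images
under the continuous map `z ↦ ((g z) j)_{j ≤ n}` closer than `ε / 2`: the closed sets
`{(z, z') | z m = z' m}` decrease to the diagonal, so by compactness one of them lies in the open
neighbourhood `{dist < ε / 2}` of the diagonal. Since `g_{j,n} ∘ T_{n,m}(g) = T_{j,m}(g)`, both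
claims follow. -/

section InverseLimit

variable {X : ℕ → Type*} {f : ∀ n, X (n + 1) → X n}

lemma bondMap_apply_of_mem_invLim {x : ∀ n, X n} (hx : x ∈ invLim X f) {j m : ℕ}
    (h : j ≤ m) : bondMap f h (x m) = x j := by
  induction m, h using Nat.le_induction with
  | base =>
    unfold bondMap
    rw [Nat.leRecOn_self]
    rfl
  | succ m hm ih =>
    unfold bondMap at ih ⊢
    rw [Nat.leRecOn_succ hm, comp_apply, ← hx m, ih]

lemma apply_eq_of_mem_invLim {x y : ∀ n, X n} (hx : x ∈ invLim X f) (hy : y ∈ invLim X f)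
    {j m : ℕ} (h : j ≤ m) (hxy : x m = y m) : x j = y j := by
  rw [← bondMap_apply_of_mem_invLim hx h, ← bondMap_apply_of_mem_invLim hy h, hxy]

variable [∀ n, TopologicalSpace (X n)]

lemma isClosed_invLim [∀ n, T2Space (X n)] (hf : ∀ n, Continuous (f n)) :
    IsClosed (invLim X f) := by
  simp only [invLim, ofPred_forall]
  exact isClosed_iInter fun n =>
    isClosed_eq (continuous_apply n) ((hf n).comp (continuous_apply _))

lemma compactSpace_invLim [∀ n, CompactSpace (X n)] [∀ n, T2Space (X n)]
    (hf : ∀ n, Continuous (f n)) : CompactSpace (invLim X f) :=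
  isCompact_iff_compactSpace.mp (isClosed_invLim hf).isCompact

lemma eventually_dist_lt_of_apply_eq [∀ n, T2Space (X n)] [CompactSpace (invLim X f)]
    {M : Type*} [PseudoMetricSpace M] {h : invLim X f → M} (hh : Continuous h) {ε : ℝ}
    (hε : 0 < ε) :
    ∀ᶠ m in atTop, ∀ z z' : invLim X f, z.1 m = z'.1 m → dist (h z) (h z') < ε := by
  let D : ℕ → Set (invLim X f × invLim X f) := fun m => {p | p.1.1 m = p.2.1 m}
  have hD_anti : Antitone D := fun k m hkm p hp =>
    apply_eq_of_mem_invLim p.1.2 p.2.2 hkm hp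
  have hD_closed (m : ℕ) : IsClosed (D m) := isClosed_eq
    ((continuous_apply m).comp (continuous_subtype_val.comp continuous_fst))
    ((continuous_apply m).comp (continuous_subtype_val.comp continuous_snd))
  have hU : IsOpen {p : invLim X f × invLim X f | dist (h p.1) (h p.2) < ε} :=
    isOpen_lt (by fun_prop) continuous_const
  obtain ⟨m₀, hm₀⟩ := exists_subset_nhds_of_isCompact' hD_anti.directed_ge
    (fun m => (hD_closed m).isCompact) hD_closed fun p hp => by
      have hdiag : p.1 = p.2 := Subtype.ext (funext (mem_iInter.mp hp))
      exact hU.mem_nhds (by simpa [hdiag] using hε)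
  exact eventually_atTop.mpr ⟨m₀, fun m hm z z' hzz' =>
    hm₀ (hD_anti hm (show (z, z') ∈ D m from hzz'))⟩

end InverseLimit

lemma bondMap_image_Ttrans {X Y : ℕ → Type*} {f : ∀ n, X (n + 1) → X n}
    {gs : ∀ n, Y (n + 1) → Y n} (g : invLim X f → invLim Y gs) {j n : ℕ} (hj : j ≤ n)
    (m : ℕ) (x : X m) : bondMap gs hj '' Ttrans g n m x = Ttrans g j m x := by
  ext y
  simp only [Ttrans, mem_image, mem_ofPred_eq]
  constructor
  · rintro ⟨_, ⟨z, hz, rfl⟩, rfl⟩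
    exact ⟨z, hz, (bondMap_apply_of_mem_invLim (g z).2 hj).symm⟩
  · rintro ⟨z, hz, rfl⟩
    exact ⟨_, ⟨z, hz, rfl⟩, bondMap_apply_of_mem_invLim (g z).2 hj⟩

theorem stmt4_general
    {X Y : ℕ → Type*} [∀ n, MetricSpace (X n)] [∀ n, CompactSpace (X n)]
    [∀ n, MetricSpace (Y n)]
    (f : ∀ n, X (n + 1) → X n) (gs : ∀ n, Y (n + 1) → Y n)
    (hfc : ∀ n, Continuous (f n))
    (g : ↥(invLim X f) → ↥(invLim Y gs)) (hg : Continuous g)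
    (ε : ℝ) (hε : 0 < ε) (n : ℕ) :
    ∃ m₀ : ℕ, ∀ m : ℕ, m₀ ≤ m → ∀ j : ℕ, ∀ hj : j ≤ n,
      (∀ x : X m, diam (bondMap gs hj '' Ttrans g n m x) < ε) ∧
      (∀ z : ↥(invLim X f), (g z).1 j ∈ bondMap gs hj '' Ttrans g n m (z.1 m)) := by
  have := compactSpace_invLim hfc
  let G : invLim X f → ∀ j : Fin (n + 1), Y j := fun z j => (g z).1 j
  have hG : Continuous G :=
    continuous_pi fun j => (continuous_apply (j : ℕ)).comp (continuous_subtype_val.comp hg)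
  obtain ⟨m₀, hm₀⟩ := eventually_atTop.mp (eventually_dist_lt_of_apply_eq hG (half_pos hε))
  refine ⟨m₀, fun m hm j hj => ⟨fun x => ?_, fun z => ?_⟩⟩
  · rw [bondMap_image_Ttrans]
    refine (diam_le_of_forall_dist_le (half_pos hε).le ?_).trans_lt (half_lt_self hε)
    rintro _ ⟨z, hz, rfl⟩ _ ⟨z', hz', rfl⟩
    exact ((dist_le_pi_dist (G z) (G z') ⟨j, by omega⟩).trans_lt
      (hm₀ m hm z z' (hz.trans hz'.symm))).le
  · rw [bondMap_image_Ttrans]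
    exact ⟨z, rfl, rfl⟩

theorem stmt4
    {X Y : ℕ → Type*} [∀ n, MetricSpace (X n)] [∀ n, CompactSpace (X n)]
    [∀ n, MetricSpace (Y n)] [∀ n, CompactSpace (Y n)]
    (f : ∀ n, X (n + 1) → X n) (gs : ∀ n, Y (n + 1) → Y n)
    (hfc : ∀ n, Continuous (f n)) (hfs : ∀ n, Surjective (f n))
    (hgc : ∀ n, Continuous (gs n)) (hgs : ∀ n, Surjective (gs n))
    (g : ↥(invLim X f) → ↥(invLim Y gs)) (hg : Continuous g)
    (ε : ℝ) (hε : 0 < ε) (n : ℕ) :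
    ∃ m₀ : ℕ, ∀ m : ℕ, m₀ ≤ m → ∀ j : ℕ, ∀ hj : j ≤ n,
      (∀ x : X m, diam (bondMap gs hj '' Ttrans g n m x) < ε) ∧
      (∀ z : ↥(invLim X f), (g z).1 j ∈ bondMap gs hj '' Ttrans g n m (z.1 m)) :=
  stmt4_general f gs hfc g hg ε hε n
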